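/- Take a_n = 1/(100 n³) and N = 4. For every x ∈ [0,1) and every nonempty open interval U ⊆ [0,1), there exist an integer m ≥ 1 and a point y ∈ U with T^m(y) = x; that is, the set of preimages ⋃_{m≥1} T^{-m}(x) is dense in [0,1). -/

import Mathlib

/-!
Every point of `[0,1)` lies in `g([0,1))` for an inverse branch `g` of `T` that maps `[0,1)`
into itself with Lipschitz constant at most `r = max (3/4) |J| < 1`: the derivatives of
`v_n, w_n` lie in `[a_n, 3 a_n]` with `a_n < 1/4`, and `u_j` has slope `|J|/N`. The branches
`v_n, w_n` exactly cover `[b_{n-1}, b_n)` because `cos²` and `sin²` both average to `1/2` over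
`[0,1]` at the frequency `2πn⁴`. Pulling `x` back along branches chosen to follow a target
point `z` then gives `y` with `T^m y = x` and `|y - z| ≤ r^m`.
-/

open MeasureTheory Set Filter

noncomputable section

namespace Gouezel

/-- `b a n = 4 * ∑_{k=1}^n a_k` (left endpoints of the intervals `I_n`). -/
def b (a : ℕ → ℝ) (n : ℕ) : ℝ := 4 * ∑ k ∈ Finset.range n, a (k + 1)

/-- `b_∞ = 4 * ∑_{n=1}^∞ a_n`. -/
def binf (a : ℕ → ℝ) : ℝ := 4 * ∑' n : ℕ, a (n + 1)

/-- The length `|J| = 1 - b_∞` of the interval `J = [b_∞, 1)`. -/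
def lenJ (a : ℕ → ℝ) : ℝ := 1 - binf a

/-- `v_n'(x) = a_n (1 + 2 cos²(2π n⁴ x))`. -/
def vd (a : ℕ → ℝ) (n : ℕ) (x : ℝ) : ℝ :=
  a n * (1 + 2 * Real.cos (2 * Real.pi * (n : ℝ) ^ 4 * x) ^ 2)

/-- `w_n'(x) = a_n (1 + 2 sin²(2π n⁴ x))`. -/
def wd (a : ℕ → ℝ) (n : ℕ) (x : ℝ) : ℝ :=
  a n * (1 + 2 * Real.sin (2 * Real.pi * (n : ℝ) ^ 4 * x) ^ 2)

/-- The inverse branch `v_n(x) = b_{n-1} + ∫_0^x v_n'(t) dt`. -/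
def v (a : ℕ → ℝ) (n : ℕ) (x : ℝ) : ℝ := b a (n - 1) + ∫ t in (0:ℝ)..x, vd a n t

/-- The inverse branch `w_n(x) = b_{n-1} + 2 a_n + ∫_0^x w_n'(t) dt`. -/
def w (a : ℕ → ℝ) (n : ℕ) (x : ℝ) : ℝ :=
  b a (n - 1) + 2 * a n + ∫ t in (0:ℝ)..x, wd a n t

/-- The affine inverse branches `u_j(x) = b_∞ + (j-1)|J|/N + (|J|/N) x`, `1 ≤ j ≤ N`. -/
def u (a : ℕ → ℝ) (N : ℕ) (j : ℕ) (x : ℝ) : ℝ :=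
  binf a + ((j : ℝ) - 1) * (lenJ a / N) + (lenJ a / N) * x

/-- The transfer operator on complex-valued functions. -/
def L (a : ℕ → ℝ) (N : ℕ) (f : ℝ → ℂ) (x : ℝ) : ℂ :=
  (∑' n : ℕ, ((vd a (n + 1) x : ℂ) * f (v a (n + 1) x)
      + (wd a (n + 1) x : ℂ) * f (w a (n + 1) x)))
    + ((lenJ a / (N : ℝ) : ℝ) : ℂ) * ∑ j ∈ Finset.range N, f (u a N (j + 1) x)

/-- The transfer operator on real-valued functions. -/
def LR (a : ℕ → ℝ) (N : ℕ) (f : ℝ → ℝ) (x : ℝ) : ℝ :=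
  (∑' n : ℕ, (vd a (n + 1) x * f (v a (n + 1) x) + wd a (n + 1) x * f (w a (n + 1) x)))
    + (lenJ a / N) * ∑ j ∈ Finset.range N, f (u a N (j + 1) x)

/-- The part `L_n` of the transfer operator coming from the branches `v_n, w_n`. -/
def Ln (a : ℕ → ℝ) (n : ℕ) (f : ℝ → ℂ) (x : ℝ) : ℂ :=
  (vd a n x : ℂ) * f (v a n x) + (wd a n x : ℂ) * f (w a n x)

/-- Sup norm of `f` on `[0,1)`. -/
def supNorm (f : ℝ → ℂ) : ℝ := ⨆ x : Ico (0:ℝ) 1, ‖f x.1‖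

/-- Best Lipschitz constant of `f` on `[0,1)` (the term at `x = y` is `0/0 = 0`). -/
def lipConst (f : ℝ → ℂ) : ℝ :=
  ⨆ p : Ico (0:ℝ) 1 × Ico (0:ℝ) 1, ‖f p.1.1 - f p.2.1‖ / |p.1.1 - p.2.1|

/-- Lipschitz norm `‖f‖_Lip = sup|f| + Lip(f)` on `[0,1)`. -/
def lipNorm (f : ℝ → ℂ) : ℝ := supNorm f + lipConst f

/-- `f` is bounded and Lipschitz on `[0,1)`. -/
def BddLip (f : ℝ → ℂ) : Prop :=
  ∃ K : ℝ, (∀ x ∈ Ico (0:ℝ) 1, ‖f x‖ ≤ K) ∧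
    ∀ x ∈ Ico (0:ℝ) 1, ∀ y ∈ Ico (0:ℝ) 1, ‖f x - f y‖ ≤ K * |x - y|

/-- The specific choice `a_n = 1/(100 n³)`. -/
def aa (n : ℕ) : ℝ := 1 / (100 * (n : ℝ) ^ 3)

/-- Standing hypotheses on the sequence `(a_n)`: positivity and `∑ a_n < 1/4`. -/
def StdHyp (a : ℕ → ℝ) : Prop :=
  (∀ n : ℕ, 1 ≤ n → 0 < a n) ∧ Summable (fun n : ℕ => a (n + 1)) ∧
    (∑' n : ℕ, a (n + 1)) < 1 / 4

/-- `T : [0,1) → [0,1)` has the maps `v_n, w_n` (`n ≥ 1`) and `u_j` (`1 ≤ j ≤ N`)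
as inverse branches. -/
def InverseBranches (a : ℕ → ℝ) (N : ℕ) (T : ℝ → ℝ) : Prop :=
  MapsTo T (Ico (0:ℝ) 1) (Ico (0:ℝ) 1) ∧
    ∀ x ∈ Ico (0:ℝ) 1,
      (∀ n : ℕ, 1 ≤ n → T (v a n x) = x ∧ T (w a n x) = x) ∧
      (∀ j : ℕ, 1 ≤ j → j ≤ N → T (u a N j x) = x)

open Real

section IteratedPreimages

variable {α : Type*} [PseudoMetricSpace α]

def IsContractingInverseBranch (T g : α → α) (S : Set α) (r : ℝ) : Prop :=
  MapsTo g S S ∧ (∀ t ∈ S, T (g t) = t) ∧ ∀ s ∈ S, ∀ t ∈ S, dist (g s) (g t) ≤ r * dist s t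

variable {T : α → α} {S : Set α} {r : ℝ}

theorem exists_iterate_eq_dist_le (hr : 0 ≤ r) {D : ℝ} (hD : ∀ s ∈ S, ∀ t ∈ S, dist s t ≤ D)
    (hcover : ∀ z ∈ S, ∃ g, IsContractingInverseBranch T g S r ∧ z ∈ g '' S)
    {x : α} (hx : x ∈ S) (m : ℕ) : ∀ z ∈ S, ∃ y ∈ S, T^[m] y = x ∧ dist y z ≤ r ^ m * D := by
  induction m with
  | zero => exact fun z hz => ⟨x, hx, rfl, by simpa using hD x hx z hz⟩
  | succ m ih =>
    intro z hz
    obtain ⟨g, ⟨hgS, hTg, hg⟩, z', hz', rfl⟩ := hcover z hz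
    obtain ⟨y, hy, hTy, hyz⟩ := ih z' hz'
    refine ⟨g y, hgS hy, by rw [Function.iterate_succ_apply, hTg y hy, hTy], ?_⟩
    calc dist (g y) (g z') ≤ r * dist y z' := hg y hy z' hz'
      _ ≤ r * (r ^ m * D) := by gcongr
      _ = r ^ (m + 1) * D := by ring

theorem exists_iterate_eq_dist_lt (hr₀ : 0 ≤ r) (hr₁ : r < 1) {D : ℝ}
    (hD : ∀ s ∈ S, ∀ t ∈ S, dist s t ≤ D)
    (hcover : ∀ z ∈ S, ∃ g, IsContractingInverseBranch T g S r ∧ z ∈ g '' S)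
    {x z : α} (hx : x ∈ S) (hz : z ∈ S) {ε : ℝ} (hε : 0 < ε) :
    ∃ m, 1 ≤ m ∧ ∃ y ∈ S, T^[m] y = x ∧ dist y z < ε := by
  have hlim : Tendsto (fun m => r ^ m * D) atTop (nhds 0) := by
    simpa using (tendsto_pow_atTop_nhds_zero_of_lt_one hr₀ hr₁).mul_const D
  obtain ⟨m, hmε, hm⟩ := ((hlim.eventually (gt_mem_nhds hε)).and (eventually_ge_atTop 1)).exists
  obtain ⟨y, hy, hTy, hyz⟩ := exists_iterate_eq_dist_le hr₀ hD hcover hx m z hz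
  exact ⟨m, hm, y, hy, hTy, hyz.trans_lt hmε⟩

end IteratedPreimages

theorem exists_isContractingInverseBranch_of_hasDerivAt {T g f : ℝ → ℝ} {r : ℝ}
    (hg : ∀ x, HasDerivAt g (f x) x) (hf₀ : ∀ x, 0 < f x) (hfr : ∀ x, f x ≤ r)
    (hrange : Ico (g 0) (g 1) ⊆ Ico 0 1) (hTg : ∀ t ∈ Ico (0:ℝ) 1, T (g t) = t)
    {z : ℝ} (hz : z ∈ Ico (g 0) (g 1)) :
    ∃ g, IsContractingInverseBranch T g (Ico 0 1) r ∧ z ∈ g '' Ico 0 1 := by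
  have hmono : StrictMono g := strictMono_of_hasDerivAt_pos hg hf₀
  have hcont : Continuous g := continuous_iff_continuousAt.2 fun x => (hg x).continuousAt
  refine ⟨g, ⟨fun t ht => hrange ⟨hmono.monotone ht.1, hmono ht.2⟩, hTg, fun s _ t _ => ?_⟩,
    intermediate_value_Ico zero_le_one hcont.continuousOn hz⟩
  simpa [Real.dist_eq] using
    (convex_univ : Convex ℝ (univ : Set ℝ)).norm_image_sub_le_of_norm_hasDerivWithin_le
      (fun x _ => (hg x).hasDerivWithinAt)
      (fun x _ => by rw [Real.norm_eq_abs, abs_of_pos (hf₀ x)]; exact hfr x)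
      (mem_univ t) (mem_univ s)

theorem integral_cos_sq_mul {c : ℝ} (hc : c ≠ 0) (hs : sin c = 0) :
    ∫ t in (0:ℝ)..1, cos (c * t) ^ 2 = 1 / 2 := by
  rw [intervalIntegral.integral_comp_mul_left (fun t => cos t ^ 2) hc, integral_cos_sq]
  simp [hs]
  field_simp

theorem integral_sin_sq_mul {c : ℝ} (hc : c ≠ 0) (hs : sin c = 0) :
    ∫ t in (0:ℝ)..1, sin (c * t) ^ 2 = 1 / 2 := by
  rw [intervalIntegral.integral_comp_mul_left (fun t => sin t ^ 2) hc, integral_sin_sq]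
  simp [hs]
  field_simp

theorem sin_two_pi_mul_natCast_pow (n k : ℕ) : sin (2 * π * (n : ℝ) ^ k) = 0 := by
  rw [show 2 * π * (n : ℝ) ^ k = ((2 * n ^ k : ℕ) : ℝ) * π by push_cast; ring]
  exact sin_nat_mul_pi _

section Branches

variable (a : ℕ → ℝ) (N : ℕ)

theorem b_succ (n : ℕ) : b a (n + 1) = b a n + 4 * a (n + 1) := by
  simp only [b, Finset.sum_range_succ]; ring

theorem vd_mem_Icc {n : ℕ} (hn : 0 ≤ a n) (x : ℝ) : vd a n x ∈ Icc (a n) (3 * a n) := by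
  have h := cos_sq_le_one (2 * π * (n : ℝ) ^ 4 * x)
  constructor <;> unfold vd <;> nlinarith [sq_nonneg (cos (2 * π * (n : ℝ) ^ 4 * x))]

theorem wd_mem_Icc {n : ℕ} (hn : 0 ≤ a n) (x : ℝ) : wd a n x ∈ Icc (a n) (3 * a n) := by
  have h := sin_sq_le_one (2 * π * (n : ℝ) ^ 4 * x)
  constructor <;> unfold wd <;> nlinarith [sq_nonneg (sin (2 * π * (n : ℝ) ^ 4 * x))]

theorem hasDerivAt_v (n : ℕ) (x : ℝ) : HasDerivAt (v a n) (vd a n x) x :=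
  ((show Continuous (vd a n) by unfold vd; fun_prop).integral_hasStrictDerivAt 0 x
    |>.hasDerivAt).const_add _

theorem hasDerivAt_w (n : ℕ) (x : ℝ) : HasDerivAt (w a n) (wd a n x) x :=
  ((show Continuous (wd a n) by unfold wd; fun_prop).integral_hasStrictDerivAt 0 x
    |>.hasDerivAt).const_add _

theorem hasDerivAt_u (j : ℕ) (x : ℝ) : HasDerivAt (u a N j) (lenJ a / N) x := by
  have h := ((hasDerivAt_id' x).const_mul (lenJ a / N)).const_add
    (binf a + ((j : ℝ) - 1) * (lenJ a / N))
  rwa [mul_one] at h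

theorem integral_vd (n : ℕ) : ∫ t in (0:ℝ)..1, vd a (n + 1) t = 2 * a (n + 1) := by
  have hc : 2 * π * ((n + 1 : ℕ) : ℝ) ^ 4 ≠ 0 := by positivity
  simp only [vd]
  rw [intervalIntegral.integral_const_mul, intervalIntegral.integral_add
    intervalIntegrable_const (Continuous.intervalIntegrable (by fun_prop) _ _),
    intervalIntegral.integral_const_mul, integral_cos_sq_mul hc (sin_two_pi_mul_natCast_pow _ _)]
  norm_num; ring

theorem integral_wd (n : ℕ) : ∫ t in (0:ℝ)..1, wd a (n + 1) t = 2 * a (n + 1) := by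
  have hc : 2 * π * ((n + 1 : ℕ) : ℝ) ^ 4 ≠ 0 := by positivity
  simp only [wd]
  rw [intervalIntegral.integral_const_mul, intervalIntegral.integral_add
    intervalIntegrable_const (Continuous.intervalIntegrable (by fun_prop) _ _),
    intervalIntegral.integral_const_mul, integral_sin_sq_mul hc (sin_two_pi_mul_natCast_pow _ _)]
  norm_num; ring

theorem v_zero (n : ℕ) : v a (n + 1) 0 = b a n := by simp [v]

theorem v_one (n : ℕ) : v a (n + 1) 1 = b a n + 2 * a (n + 1) := by
  simp only [v, Nat.add_sub_cancel, integral_vd]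

theorem w_zero (n : ℕ) : w a (n + 1) 0 = b a n + 2 * a (n + 1) := by simp [w]

theorem w_one (n : ℕ) : w a (n + 1) 1 = b a (n + 1) := by
  simp only [w, Nat.add_sub_cancel, integral_wd, b_succ]; ring

theorem u_zero (k : ℕ) : u a N (k + 1) 0 = binf a + k * (lenJ a / N) := by simp [u]

theorem u_one (k : ℕ) : u a N (k + 1) 1 = binf a + (k + 1) * (lenJ a / N) := by simp [u]; ring

end Branches

namespace StdHyp

variable {a : ℕ → ℝ} (hA : StdHyp a)
include hA

theorem pos (n : ℕ) : 0 < a (n + 1) := hA.1 _ (Nat.le_add_left 1 n)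

theorem b_nonneg (n : ℕ) : 0 ≤ b a n :=
  mul_nonneg zero_le_four (Finset.sum_nonneg fun k _ => (hA.pos k).le)

theorem b_le_binf (n : ℕ) : b a n ≤ binf a := by
  unfold b binf
  gcongr
  exact hA.2.1.sum_le_tsum _ fun k _ => (hA.pos k).le

theorem tendsto_b : Tendsto (b a) atTop (nhds (binf a)) :=
  hA.2.1.hasSum.tendsto_sum_nat.const_mul 4

theorem binf_lt_one : binf a < 1 := by unfold binf; linarith [hA.2.2]

theorem lenJ_lt_one : lenJ a < 1 := by
  have h := hA.b_le_binf 1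
  rw [b_succ, b, Finset.sum_range_zero] at h
  unfold lenJ; linarith [hA.pos 0]

theorem three_mul_lt (n : ℕ) : 3 * a (n + 1) < 3 / 4 := by
  linarith [b_succ a n, hA.b_nonneg n, hA.b_le_binf (n + 1), hA.binf_lt_one]

theorem exists_mem_Ico_b {z : ℝ} (hz : z ∈ Ico 0 (binf a)) :
    ∃ n, z ∈ Ico (b a n) (b a (n + 1)) := by
  classical
  have hex : ∃ n, z < b a (n + 1) := by
    obtain ⟨n, hn⟩ := (hA.tendsto_b.eventually (lt_mem_nhds hz.2)).exists_forall_of_atTop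
    exact ⟨n, hn (n + 1) n.le_succ⟩
  refine ⟨Nat.find hex, ?_, Nat.find_spec hex⟩
  rcases h : Nat.find hex with _ | k
  · simpa [b] using hz.1
  · exact not_lt.1 (Nat.find_min hex (h ▸ k.lt_succ_self))

variable {N : ℕ} {T : ℝ → ℝ} (hT : InverseBranches a N T)
include hT

theorem exists_branch_of_mem_Ico_b {r : ℝ} (hr : 3 / 4 ≤ r) (n : ℕ) {z : ℝ}
    (hz : z ∈ Ico (b a n) (b a (n + 1))) :
    ∃ g, IsContractingInverseBranch T g (Ico 0 1) r ∧ z ∈ g '' Ico 0 1 := by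
  have hrange : Ico (b a n) (b a (n + 1)) ⊆ Ico 0 1 := fun y hy =>
    ⟨(hA.b_nonneg n).trans hy.1, hy.2.trans_le ((hA.b_le_binf _).trans hA.binf_lt_one.le)⟩
  have hpos := hA.pos n
  have hr' : 3 * a (n + 1) ≤ r := (hA.three_mul_lt n).le.trans hr
  have hTn := fun t ht => (hT.2 t ht).1 (n + 1) (Nat.le_add_left 1 n)
  by_cases hzv : z < b a n + 2 * a (n + 1)
  · refine exists_isContractingInverseBranch_of_hasDerivAt (hasDerivAt_v a _)
      (fun x => hpos.trans_le (vd_mem_Icc a hpos.le x).1)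
      (fun x => (vd_mem_Icc a hpos.le x).2.trans hr') ?_ (fun t ht => (hTn t ht).1) ?_
    · rw [v_zero, v_one]
      exact (Ico_subset_Ico_right (by linarith [b_succ a n])).trans hrange
    · rw [v_zero, v_one]
      exact ⟨hz.1, hzv⟩
  · refine exists_isContractingInverseBranch_of_hasDerivAt (hasDerivAt_w a _)
      (fun x => hpos.trans_le (wd_mem_Icc a hpos.le x).1)
      (fun x => (wd_mem_Icc a hpos.le x).2.trans hr') ?_ (fun t ht => (hTn t ht).2) ?_
    · rw [w_zero, w_one]
      exact (Ico_subset_Ico_left (by linarith [hA.pos n])).trans hrange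
    · rw [w_zero, w_one]
      exact ⟨not_lt.1 hzv, hz.2⟩

theorem exists_branch_of_mem_J (hN : 1 ≤ N) {r : ℝ} (hr : lenJ a ≤ r) {z : ℝ}
    (hz : z ∈ Ico (binf a) 1) :
    ∃ g, IsContractingInverseBranch T g (Ico 0 1) r ∧ z ∈ g '' Ico 0 1 := by
  have hL : 0 < lenJ a := by unfold lenJ; linarith [hA.binf_lt_one]
  have hN' : (1 : ℝ) ≤ N := by exact_mod_cast hN
  have hLN : 0 < lenJ a / N := by positivity
  set q := (z - binf a) / (lenJ a / N) with hq
  have hq0 : 0 ≤ q := div_nonneg (by linarith [hz.1]) hLN.le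
  have hzq : z = binf a + q * (lenJ a / N) := by rw [hq]; field_simp; ring
  set k := ⌊q⌋₊
  have hkN : k < N := (Nat.floor_lt hq0).2 <| by
    rw [hq, div_lt_iff₀ hLN]; field_simp; unfold lenJ; linarith [hz.2]
  have hkN' : (k : ℝ) + 1 ≤ N := by exact_mod_cast hkN
  refine exists_isContractingInverseBranch_of_hasDerivAt (hasDerivAt_u a N (k + 1))
    (fun _ => hLN) (fun _ => (div_le_self hL.le hN').trans hr) ?_
    (fun t ht => (hT.2 t ht).2 (k + 1) (Nat.le_add_left 1 k) hkN) ?_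
  · rw [u_zero, u_one]
    refine Ico_subset_Ico (by nlinarith [(hA.b_nonneg 0).trans (hA.b_le_binf 0)]) ?_
    calc binf a + (k + 1) * (lenJ a / N) ≤ binf a + N * (lenJ a / N) := by gcongr
      _ = 1 := by field_simp; unfold lenJ; ring
  · rw [u_zero, u_one, hzq]
    constructor
    · gcongr; exact Nat.floor_le hq0
    · gcongr; exact Nat.lt_floor_add_one q

theorem exists_branch (hN : 1 ≤ N) {z : ℝ} (hz : z ∈ Ico (0:ℝ) 1) :
    ∃ g, IsContractingInverseBranch T g (Ico 0 1) (max (3 / 4) (lenJ a)) ∧ z ∈ g '' Ico 0 1 := by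
  rcases lt_or_ge z (binf a) with hzb | hzb
  · obtain ⟨n, hn⟩ := hA.exists_mem_Ico_b ⟨hz.1, hzb⟩
    exact hA.exists_branch_of_mem_Ico_b hT (le_max_left _ _) n hn
  · exact hA.exists_branch_of_mem_J hT hN (le_max_right _ _) ⟨hzb, hz.2⟩

theorem exists_iterate_eq_mem_Ioo (hN : 1 ≤ N) {x : ℝ} (hx : x ∈ Ico (0:ℝ) 1) {c d : ℝ}
    (hc : 0 ≤ c) (hcd : c < d) (hd : d ≤ 1) :
    ∃ m : ℕ, 1 ≤ m ∧ ∃ y ∈ Ioo c d, T^[m] y = x := by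
  have hD : ∀ s ∈ Ico (0:ℝ) 1, ∀ t ∈ Ico (0:ℝ) 1, dist s t ≤ 1 := fun s hs t ht => by
    rw [Real.dist_eq, abs_le]; constructor <;> linarith [hs.1, hs.2, ht.1, ht.2]
  obtain ⟨m, hm, y, -, hTy, hy⟩ := exists_iterate_eq_dist_lt (by positivity)
    (max_lt (by norm_num) hA.lenJ_lt_one) hD (fun z hz => hA.exists_branch hT hN hz) hx
    (z := (c + d) / 2) ⟨by linarith, by linarith⟩ (half_pos (sub_pos.2 hcd))
  rw [← Metric.mem_ball, Real.ball_eq_Ioo, show (c + d) / 2 - (d - c) / 2 = c by ring,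
    show (c + d) / 2 + (d - c) / 2 = d by ring] at hy
  exact ⟨m, hm, y, hy, hTy⟩

end StdHyp

theorem aa_le_one_div_sq (n : ℕ) : aa n ≤ 1 / 100 * (1 / (n : ℝ) ^ 2) := by
  rcases n.eq_zero_or_pos with rfl | hn
  · simp [aa]
  · have hn' : (1 : ℝ) ≤ n := by exact_mod_cast hn
    rw [aa, div_mul_div_comm, one_mul]
    gcongr
    nlinarith [pow_le_pow_right₀ hn' (by norm_num : 2 ≤ 3)]

theorem stdHyp_aa : StdHyp aa := by
  have hnonneg : ∀ n, 0 ≤ aa n := fun n => by unfold aa; positivity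
  have hsum : Summable aa :=
    Summable.of_nonneg_of_le hnonneg aa_le_one_div_sq (hasSum_zeta_two.summable.mul_left _)
  refine ⟨fun n hn => ?_, (summable_nat_add_iff 1).2 hsum, ?_⟩
  · have : (0 : ℝ) < n := by exact_mod_cast hn
    unfold aa; positivity
  · calc ∑' n, aa (n + 1) ≤ ∑' n, aa n :=
          tsum_comp_le_tsum_of_inj hsum hnonneg (add_left_injective 1)
      _ ≤ ∑' n : ℕ, 1 / 100 * (1 / (n : ℝ) ^ 2) :=
          hsum.tsum_le_tsum aa_le_one_div_sq (hasSum_zeta_two.summable.mul_left _)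
      _ = 1 / 100 * (π ^ 2 / 6) := (hasSum_zeta_two.mul_left _).tsum_eq
      _ < 1 / 4 := by nlinarith [pi_lt_four, pi_pos]

/-- with `a_n = 1/(100 n³)` and `N = 4`, for every `x ∈ [0,1)` the set
of preimages `⋃_{m≥1} T^{-m}(x)` meets every nonempty open subinterval of `[0,1)`. -/
theorem stmt14 (T : ℝ → ℝ) (hT : InverseBranches aa 4 T) :
    ∀ x ∈ Ico (0:ℝ) 1, ∀ c d : ℝ, 0 ≤ c → c < d → d ≤ 1 →
      ∃ m : ℕ, 1 ≤ m ∧ ∃ y ∈ Ioo c d, T^[m] y = x :=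
  fun _ hx _ _ hc hcd hd => stdHyp_aa.exists_iterate_eq_mem_Ioo hT (by norm_num) hx hc hcd hd

end Gouezel
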